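/- arXiv:2410.12083 — 5 statements merged into one kernel-verified Lean document; each statement's English description precedes it below -/
import Mathlib

section
/- Let x0 ∈ (0, 8/9), D1x = x0 + (x0² − x0³)^{1/3}, C1x = (D1x − √(4D1x − 3D1x²))/2. Then the quadratic polynomial g(t) = 3t²(−3C1x + 3D1x + 1) + 3t(2C1x − 4D1x) + 3D1x (which is the derivative of f(t) = t³ + 3C1x t²(1−t) + 3D1x t(1−t)²) has discriminant zero, and consequently g(t) ≥ 0 for all t, so f is monotonically nondecreasing on ℝ. -/
/-- The derivative of the x-coordinate function is a quadratic with zero discriminant,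
hence nonnegative, so the x-coordinate function is monotone. -/
theorem bezier_x_monotone (x0 : ℝ) (hx0 : x0 ∈ Set.Ioo (0:ℝ) (8/9)) :
    let D1x : ℝ := x0 + (x0^2 - x0^3) ^ ((1:ℝ)/3)
    let C1x : ℝ := (D1x - Real.sqrt (4*D1x - 3*D1x^2)) / 2
    let g : ℝ → ℝ := fun t => 3*t^2*(-3*C1x + 3*D1x + 1) + 3*t*(2*C1x - 4*D1x) + 3*D1x
    let f : ℝ → ℝ := fun t => t^3 + 3*C1x*t^2*(1-t) + 3*D1x*t*(1-t)^2
    (3*(2*C1x - 4*D1x))^2 - 4*(3*(-3*C1x + 3*D1x + 1))*(3*D1x) = 0 ∧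
    (∀ t : ℝ, 0 ≤ g t) ∧ Monotone f := by
  obtain ⟨hx0p, hx0u⟩ := hx0
  intro D1x C1x g f
  -- basic facts about the cube root term
  have hy : (0:ℝ) ≤ x0^2 - x0^3 := by nlinarith
  have hu0 : (0:ℝ) ≤ (x0^2 - x0^3) ^ ((1:ℝ)/3) := Real.rpow_nonneg hy _
  have hu3 : ((x0^2 - x0^3) ^ ((1:ℝ)/3))^3 = x0^2 - x0^3 := by
    rw [← Real.rpow_natCast ((x0^2 - x0^3) ^ ((1:ℝ)/3)) 3, ← Real.rpow_mul hy]
    norm_num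
  -- D1x bounds
  have hD0 : (0:ℝ) ≤ D1x := by
    simp only [D1x]; positivity
  have hDle : D1x ≤ 4/3 := by
    have hv : (0:ℝ) ≤ 4/3 - x0 := by linarith
    have hcube : ((x0^2 - x0^3) ^ ((1:ℝ)/3))^3 ≤ (4/3 - x0)^3 := by
      rw [hu3]; nlinarith [sq_nonneg (x0 - 8/9)]
    have : (x0^2 - x0^3) ^ ((1:ℝ)/3) ≤ 4/3 - x0 := by
      nlinarith [sq_nonneg ((x0^2 - x0^3) ^ ((1:ℝ)/3) + (4/3 - x0)),
        sq_nonneg ((x0^2 - x0^3) ^ ((1:ℝ)/3) - (4/3 - x0))]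
    simp only [D1x]; linarith
  clear_value D1x
  have hrad : (0:ℝ) ≤ 4*D1x - 3*D1x^2 := by nlinarith [mul_nonneg hD0 (by linarith : (0:ℝ) ≤ 4/3 - D1x)]
  set s : ℝ := Real.sqrt (4*D1x - 3*D1x^2) with hs
  have hs0 : 0 ≤ s := Real.sqrt_nonneg _
  have hs2 : s^2 = 4*D1x - 3*D1x^2 := Real.sq_sqrt hrad
  have hC : C1x = (D1x - s)/2 := rfl
  -- discriminant is zero
  have hdisc : (3*(2*C1x - 4*D1x))^2 - 4*(3*(-3*C1x + 3*D1x + 1))*(3*D1x) = 0 := by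
    rw [hC]; linear_combination (9:ℝ) * hs2
  refine ⟨hdisc, ?_, ?_⟩
  · -- g nonnegative
    intro t
    have ha : (3:ℝ) ≤ 3*(-3*C1x + 3*D1x + 1) := by rw [hC]; nlinarith
    simp only [g]
    nlinarith [sq_nonneg (2*(3*(-3*C1x + 3*D1x + 1))*t + 3*(2*C1x - 4*D1x)), hdisc, ha]
  · -- monotone
    have hd : ∀ t : ℝ, HasDerivAt f (g t) t := by
      intro t
      have h1 : HasDerivAt (fun t:ℝ => t^3) (3*t^2) t := by
        simpa using hasDerivAt_pow 3 t
      have h2 : HasDerivAt (fun t:ℝ => (1-t)) (-1) t := by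
        simpa using (hasDerivAt_id t).const_sub 1
      have h3 : HasDerivAt (fun t:ℝ => 3*C1x*t^2*(1-t))
          ((3*C1x*(2*t))*(1-t) + 3*C1x*t^2*(-1)) t := by
        exact (((hasDerivAt_pow 2 t).const_mul (3*C1x)).congr_deriv (by ring)).mul h2
      have h4 : HasDerivAt (fun t:ℝ => (1-t)^2) (2*(1-t)*(-1)) t := by
        simpa using h2.fun_pow 2
      have h5 : HasDerivAt (fun t:ℝ => 3*D1x*t*(1-t)^2)
          ((3*D1x)*(1-t)^2 + (3*D1x*t)*(2*(1-t)*(-1))) t := by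
        exact (((hasDerivAt_id t).const_mul (3*D1x)).congr_deriv (by ring)).mul h4
      have := (h1.add h3).add h5
      refine this.congr_deriv ?_
      simp only [g]; ring
    have hg' : ∀ t : ℝ, 0 ≤ g t := by
      intro t
      have ha : (3:ℝ) ≤ 3*(-3*C1x + 3*D1x + 1) := by rw [hC]; nlinarith
      simp only [g]
      nlinarith [sq_nonneg (2*(3*(-3*C1x + 3*D1x + 1))*t + 3*(2*C1x - 4*D1x)), hdisc, ha]
    exact monotone_of_deriv_nonneg (fun t => (hd t).differentiableAt)
      (fun t => (hd t).deriv ▸ hg' t)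
end

section
/- Let x0 ∈ (0, 8/9) and let t0 and C2x = (x0 − t0³)/(3(1−t0)t0) be given, where t0 = (C1x − 2D1x)/(−1 + 3C1x − 3D1x) with D1x = x0 + (x0² − x0³)^{1/3} and C1x = (D1x − √(4D1x − 3D1x²))/2. Then t0 ∈ (0,1), and the cubic Bézier x-coordinate function f2(t) = t³ + 3C2x t²(1−t) + 3C2x t(1−t)² satisfies f2(t0) = x0 and f2 is strictly increasing on [0,1] with f2(0) = 0, f2(1) = 1. -/
set_option maxHeartbeats 1000000 in
private lemma bezier_aux (x0 u s : ℝ) (hx1 : 0 < x0) (hx2 : x0 < 8/9)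
    (hu_pos : 0 < u) (hu3 : u^3 = x0^2 - x0^3)
    (hs2 : s^2 = 4*(x0+u) - 3*(x0+u)^2) (hs_pos : 0 < s) :
    s*(u - 2*x0) = 2*x0 - 3*(x0+u)*u := by
  set w : ℝ := Real.sqrt (1 + 27*x0) with hw_def
  have hw2 : w^2 = 1 + 27*x0 := by rw [hw_def]; exact Real.sq_sqrt (by linarith)
  have hw_nonneg : 0 ≤ w := by rw [hw_def]; exact Real.sqrt_nonneg _
  have hw5 : w < 5 := by nlinarith [hw2, hw_nonneg]
  have hw_gt : 1 + 3*x0 < w := by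
    by_contra hc
    push_neg at hc
    have := mul_self_le_mul_self hw_nonneg hc
    nlinarith [hw2]
  have key : 729*(x0^2 - x0^3) - 27*(w - 1 - 3*x0)^3 = (w-1)^2*(w-2)^2*(5-w) := by
    linear_combination (w^3 - 11*w^2 + 17*w + 27*x0*w - 7 - 54*x0) * hw2
  have h5w : 0 ≤ ((w-1)*(w-2))^2*(5-w) := mul_nonneg (sq_nonneg _) (by linarith)
  have hcube : (w - 1 - 3*x0)^3 ≤ 27*(x0^2 - x0^3) := by linarith [key, h5w]
  have h3u : w - 1 - 3*x0 ≤ 3*u := by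
    by_contra hc
    push_neg at hc
    have h1 := pow_lt_pow_left₀ hc (by positivity : (0:ℝ) ≤ 3*u) (by norm_num : 3 ≠ 0)
    have h2 : (3*u)^3 = 27*(x0^2 - x0^3) := by
      rw [show (3*u)^3 = 27*u^3 by ring, hu3]
    linarith
  have hh : 0 ≤ 3*u^2 + (2+6*x0)*u + 3*x0^2 - 7*x0 := by
    have hprod : 0 ≤ (3*u - (w - 1 - 3*x0)) * (3*u + (1 + 3*x0 + w)) :=
      mul_nonneg (by linarith) (by linarith)
    linarith [hprod, hw2]
  have hAB : (u - 2*x0)*(2*x0 - 3*(x0+u)*u) = x0*(3*u^2 + (2+6*x0)*u + 3*x0^2 - 7*x0) := by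
    linear_combination (-3 : ℝ) * hu3
  have hABnn : 0 ≤ (u - 2*x0)*(2*x0 - 3*(x0+u)*u) := by
    rw [hAB]; exact mul_nonneg hx1.le hh
  have hB2 : (2*x0 - 3*(x0+u)*u)^2 = s^2*(u - 2*x0)^2 := by
    linear_combination (12*u + 12*x0 - 4) * hu3 - (u - 2*x0)^2 * hs2
  have hfac : (s*(u - 2*x0) - (2*x0 - 3*(x0+u)*u)) * (s*(u - 2*x0) + (2*x0 - 3*(x0+u)*u)) = 0 := by
    linear_combination (-1 : ℝ) * hB2
  rcases mul_eq_zero.mp hfac with h | h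
  · linarith
  · have h1 : 0 ≤ s * ((u - 2*x0)*(2*x0 - 3*(x0+u)*u)) := mul_nonneg hs_pos.le hABnn
    have h2 : s*((u - 2*x0)*(2*x0 - 3*(x0+u)*u)) = -(2*x0 - 3*(x0+u)*u)^2 := by
      linear_combination (2*x0 - 3*(x0+u)*u) * h
    have hBsq : (2*x0 - 3*(x0+u)*u)^2 = 0 :=
      le_antisymm (by linarith) (sq_nonneg _)
    have hB0 : 2*x0 - 3*(x0+u)*u = 0 := (pow_eq_zero_iff two_ne_zero).mp hBsq
    rw [hB0] at h ⊢
    linarith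

set_option maxHeartbeats 1000000 in
/-- Lemma 2: the cubic Bézier curve with repeated control point `(C2x, 0)` traces the
segment monotonically and reaches `x0` at parameter `t0`. -/
theorem bezier_flat_curve (x0 : ℝ) (hx0 : x0 ∈ Set.Ioo (0:ℝ) (8/9)) :
    let D1x : ℝ := x0 + (x0^2 - x0^3) ^ ((1:ℝ)/3)
    let C1x : ℝ := (D1x - Real.sqrt (4*D1x - 3*D1x^2)) / 2
    let t0 : ℝ := (C1x - 2*D1x) / (-1 + 3*C1x - 3*D1x)
    let C2x : ℝ := (x0 - t0^3) / (3*(1 - t0)*t0)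
    let f2 : ℝ → ℝ := fun t => t^3 + 3*C2x*t^2*(1-t) + 3*C2x*t*(1-t)^2
    t0 ∈ Set.Ioo (0:ℝ) 1 ∧ f2 t0 = x0 ∧ StrictMonoOn f2 (Set.Icc 0 1) ∧
      f2 0 = 0 ∧ f2 1 = 1 := by
  intro D1x C1x t0 C2x f2
  obtain ⟨hx1, hx2⟩ := hx0
  have hD1 : D1x = x0 + (x0^2 - x0^3) ^ ((1:ℝ)/3) := rfl
  have hC1 : C1x = (D1x - Real.sqrt (4*D1x - 3*D1x^2)) / 2 := rfl
  have ht0d : t0 = (C1x - 2*D1x) / (-1 + 3*C1x - 3*D1x) := rfl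
  have hC2 : C2x = (x0 - t0^3) / (3*(1 - t0)*t0) := rfl
  have hf2 : ∀ t, f2 t = t^3 + 3*C2x*t^2*(1-t) + 3*C2x*t*(1-t)^2 := fun t => rfl
  clear_value f2 C2x t0 C1x D1x
  set u : ℝ := (x0^2 - x0^3) ^ ((1:ℝ)/3) with hu_def
  set s : ℝ := Real.sqrt (4*D1x - 3*D1x^2) with hs_def
  have ha : 0 < x0^2 - x0^3 := by
    nlinarith [mul_pos (mul_pos hx1 hx1) (show (0:ℝ) < 1 - x0 by linarith)]
  have hu_pos : 0 < u := by rw [hu_def]; exact Real.rpow_pos_of_pos ha _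
  have hu3 : u^3 = x0^2 - x0^3 := by
    rw [hu_def, ← Real.rpow_natCast ((x0^2 - x0^3) ^ ((1:ℝ)/3)) 3, ← Real.rpow_mul ha.le]
    norm_num
  have hDpos : 0 < x0 + u := by linarith
  have h89 : 0 < (x0 - 8/9)^2 := by nlinarith
  have hcub1 : u^3 < (4/3 - x0)^3 := by rw [hu3]; nlinarith [h89]
  have hult : u < 4/3 - x0 := by
    by_contra hc
    push_neg at hc
    have := pow_le_pow_left₀ (show (0:ℝ) ≤ 4/3 - x0 by linarith) hc 3
    linarith
  have hDval : 0 < 4*D1x - 3*D1x^2 := by rw [hD1]; nlinarith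
  have hs2 : s^2 = 4*(x0+u) - 3*(x0+u)^2 := by
    rw [hs_def, Real.sq_sqrt hDval.le, hD1]
  have hs_pos : 0 < s := by rw [hs_def]; exact Real.sqrt_pos.mpr hDval
  have hsAB : s*(u - 2*x0) = 2*x0 - 3*(x0+u)*u :=
    bezier_aux x0 u s hx1 hx2 hu_pos hu3 hs2 hs_pos
  have hden : -1 + 3*C1x - 3*D1x < 0 := by
    rw [hC1, hD1]; linarith
  have ht0 : t0 = x0/(x0+u) := by
    rw [ht0d, div_eq_div_iff (ne_of_lt hden) hDpos.ne']
    rw [hC1, hD1]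
    linear_combination (-1/2 : ℝ) * hsAB
  have ht0pos : 0 < t0 := by rw [ht0]; positivity
  have ht0lt : t0 < 1 := by rw [ht0, div_lt_one hDpos]; linarith
  have hR : t0*(x0+u) = x0 := by rw [ht0]; exact div_mul_cancel₀ _ hDpos.ne'
  have hdpos : 0 < 3*(1 - t0)*t0 := by nlinarith
  have heq3 : (x0 - t0^3)*(x0+u)^3 = (x0*(3*(1-t0)*t0))*(x0+u)^3 := by
    linear_combination (-(x0+u)^2*t0^2 + (3*x0*u^2+6*x0^2*u-x0*u+3*x0^3-x0^2)*t0
      + (-3*x0*u^2-3*x0^2*u-x0^2)) * hR + x0 * hu3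
  have heq : x0 - t0^3 = x0*(3*(1-t0)*t0) :=
    mul_right_cancel₀ (pow_ne_zero 3 hDpos.ne') heq3
  have hC2x : C2x = x0 := by
    rw [hC2, heq]
    exact mul_div_cancel_right₀ x0 hdpos.ne'
  have hf2t0 : f2 t0 = x0 := by
    rw [hf2 t0, hC2x]
    linear_combination (-1 : ℝ) * heq
  have hmonos : StrictMono f2 := by
    intro a b hab
    have keym : f2 b - f2 a = (b-a)*((3/4)*(a+b-2*x0)^2 + (1/4)*(a-b)^2 + 3*x0*(1-x0)) := by
      rw [hf2 a, hf2 b, hC2x]; ring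
    have hbr : 0 < (3/4)*(a+b-2*x0)^2 + (1/4)*(a-b)^2 + 3*x0*(1-x0) := by
      nlinarith [sq_nonneg (a+b-2*x0), sq_nonneg (a-b),
        mul_pos hx1 (show (0:ℝ) < 1 - x0 by linarith)]
    have hpos := mul_pos (sub_pos.mpr hab) hbr
    linarith [keym]
  refine ⟨⟨ht0pos, ht0lt⟩, hf2t0, hmonos.strictMonoOn _, ?_, ?_⟩
  · rw [hf2 0]; ring
  · rw [hf2 1]; ring
end

section
/- Let A = (0,0), d ≥ 1, s = b2/b1 ∈ [0,1) for B = (b1,b2) with b1 > 0 and 0 ≤ b2 < b1, k ∈ (0,1), Q = (1 + s/2, s/2), P = (1−k)(1,1) + kQ, and γ(t) = B t³ + 3P t²(1−t) + 3P t(1−t)². Then for all t ∈ (0,1), γ(t) lies in the open region {(x,y) : x > y > 0}, provided b2 > 0; if b2 = 0 then γ(t) lies in {(x,y) : x > y ∧ y ≥ 0} with y > 0 for t ∈ (0,1) when k < 1. -/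
/-- Planarity lemma (Section 4.3.1): the Bézier edge curve stays in the wedge
`{(x,y) : x > y > 0}`. -/
theorem bezier_edge_in_wedge (b1 b2 : ℝ) (hb1 : 0 < b1) (hb2 : 0 ≤ b2) (hbb : b2 < b1)
    (k : ℝ) (hk : k ∈ Set.Ioo (0:ℝ) 1) :
    let B : ℝ × ℝ := (b1, b2)
    let s : ℝ := b2 / b1
    let Q : ℝ × ℝ := (1 + s/2, s/2)
    let P : ℝ × ℝ := (1 - k) • ((1:ℝ), (1:ℝ)) + k • Q
    let γ : ℝ → ℝ × ℝ := fun t => t^3 • B + (3*t^2*(1-t)) • P + (3*t*(1-t)^2) • P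
    ∀ t ∈ Set.Ioo (0:ℝ) 1,
      (0 < b2 → (γ t).1 > (γ t).2 ∧ (γ t).2 > 0) ∧
      (b2 = 0 → ((γ t).1 > (γ t).2 ∧ (γ t).2 ≥ 0) ∧ (k < 1 → 0 < (γ t).2)) := by
  intro B s Q P γ t ht
  obtain ⟨ht0, ht1⟩ := ht
  obtain ⟨hk0, hk1⟩ := hk
  have hs0 : 0 ≤ s := div_nonneg hb2 hb1.le
  have hs1 : s < 1 := (div_lt_one hb1).mpr hbb
  simp only [B, s, Q, P, γ, Prod.smul_fst, Prod.smul_snd, Prod.fst_add, Prod.snd_add,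
    smul_eq_mul, Prod.smul_mk]
  constructor
  · intro hb2'
    have hs0' : 0 < s := div_pos hb2' hb1
    constructor
    · nlinarith [mul_pos ht0 (sub_pos.mpr ht1), pow_pos ht0 3]
    · nlinarith [mul_pos ht0 (sub_pos.mpr ht1), pow_pos ht0 3, mul_pos hk0 hs0']
  · intro hb2'
    have hs : s = 0 := by simp [s, hb2']
    subst hb2'
    simp only [zero_div]
    constructor
    · constructor
      · nlinarith [mul_pos ht0 (sub_pos.mpr ht1), pow_pos ht0 3]
      · nlinarith [mul_pos ht0 (sub_pos.mpr ht1)]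
    · intro _
      nlinarith [mul_pos ht0 (sub_pos.mpr ht1)]
end

section
/- Law-of-sines angle bound: if P1, P2, A ∈ ℝ² with ‖P1 − P2‖ ≥ 1/(√2 d), ‖P1 − A‖ ≤ √10/2, and the angle ∠AP2P1 has sine at least 1/√2, then sin(∠P1AP2) ≥ 1/(√10 d), and hence ∠P1AP2 ≥ 1/(√10 d). -/
open EuclideanGeometry

private lemma sin_law_aux {V : Type*} [NormedAddCommGroup V] [InnerProductSpace ℝ V]
    (u v : V) :
    Real.sin (InnerProductGeometry.angle (v - u) (-u)) * (‖v - u‖ * ‖u‖) =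
      Real.sin (InnerProductGeometry.angle u v) * (‖u‖ * ‖v‖) := by
  rw [show Real.sin (InnerProductGeometry.angle (v - u) (-u)) * (‖v - u‖ * ‖u‖)
      = Real.sin (InnerProductGeometry.angle (v - u) (-u)) * (‖v - u‖ * ‖-u‖) by rw [norm_neg],
    InnerProductGeometry.sin_angle_mul_norm_mul_norm,
    InnerProductGeometry.sin_angle_mul_norm_mul_norm]
  congr 1
  simp only [inner_sub_left, inner_sub_right, inner_neg_left, inner_neg_right,
    real_inner_comm u v]
  ring

/-- Law-of-sines angle bound from the angular-resolution argument. -/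
theorem angle_lower_bound (d : ℝ) (hd : 1 ≤ d) (P1 P2 A : EuclideanSpace ℝ (Fin 2))
    (h12 : dist P1 P2 ≥ 1 / (Real.sqrt 2 * d))
    (h1A : dist P1 A ≤ Real.sqrt 10 / 2)
    (hsin : Real.sin (∠ A P2 P1) ≥ 1 / Real.sqrt 2) :
    Real.sin (∠ P1 A P2) ≥ 1 / (Real.sqrt 10 * d) ∧
      ∠ P1 A P2 ≥ 1 / (Real.sqrt 10 * d) := by
  have h10 : (1:ℝ) ≤ Real.sqrt 10 := by
    rw [show (1:ℝ) = Real.sqrt 1 by simp]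
    exact Real.sqrt_le_sqrt (by norm_num)
  have h10pos : (0:ℝ) < Real.sqrt 10 := by linarith
  have hbound1 : 1 / (Real.sqrt 10 * d) ≤ 1 := by
    rw [div_le_one (by positivity)]
    nlinarith
  have hbound2 : 1 / (Real.sqrt 10 * d) ≤ Real.pi / 2 := by
    have := Real.pi_gt_three
    linarith
  -- degenerate cases
  by_cases hP1A : P1 = A
  · subst hP1A
    simp only [EuclideanGeometry.angle_self_left, Real.sin_pi_div_two]
    exact ⟨by linarith, by linarith⟩
  by_cases hAP2 : A = P2
  · subst hAP2
    simp only [EuclideanGeometry.angle_self_right, Real.sin_pi_div_two]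
    exact ⟨by linarith, by linarith⟩
  -- main case
  have hu : A - P2 ≠ 0 := sub_ne_zero.2 hAP2
  have hupos : (0:ℝ) < ‖A - P2‖ := norm_pos_iff.2 hu
  have hxpos : (0:ℝ) < dist P1 A := dist_pos.2 hP1A
  have key := sin_law_aux (V := EuclideanSpace ℝ (Fin 2)) (A - P2) (P1 - P2)
  have e1 : P1 - P2 - (A - P2) = P1 - A := by abel
  rw [e1, neg_sub] at key
  have hang1 : ∠ P1 A P2 = InnerProductGeometry.angle (P1 - A) (P2 - A) := rfl
  have hang2 : ∠ A P2 P1 = InnerProductGeometry.angle (A - P2) (P1 - P2) := rfl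
  have hd1 : dist P1 A = ‖P1 - A‖ := dist_eq_norm _ _
  have hd2 : dist P1 P2 = ‖P1 - P2‖ := dist_eq_norm _ _
  -- key : sin (∠ P1 A P2) * (dist P1 A * ‖A - P2‖) = sin (∠ A P2 P1) * (‖A - P2‖ * dist P1 P2)
  rw [← hang1, ← hang2, ← hd1, ← hd2] at key
  have hcancel : Real.sin (∠ P1 A P2) * dist P1 A = Real.sin (∠ A P2 P1) * dist P1 P2 := by
    have := key
    field_simp at this ⊢
    nlinarith [this]
  have hsqrt2 : (0:ℝ) < Real.sqrt 2 := Real.sqrt_pos.2 (by norm_num)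
  have hrhs : Real.sin (∠ A P2 P1) * dist P1 P2 ≥ 1 / (2 * d) := by
    have h1 : (1 / Real.sqrt 2) * (1 / (Real.sqrt 2 * d)) = 1 / (2 * d) := by
      rw [div_mul_div_comm, one_mul]
      congr 1
      rw [← mul_assoc, Real.mul_self_sqrt (by norm_num)]
    calc Real.sin (∠ A P2 P1) * dist P1 P2
        ≥ (1 / Real.sqrt 2) * (1 / (Real.sqrt 2 * d)) := by
          apply mul_le_mul hsin h12 (by positivity)
          linarith [Real.sin_nonneg_of_nonneg_of_le_pi (EuclideanGeometry.angle_nonneg A P2 P1)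
            (EuclideanGeometry.angle_le_pi A P2 P1)]
      _ = 1 / (2 * d) := h1
  have hsinA : Real.sin (∠ P1 A P2) ≥ 1 / (Real.sqrt 10 * d) := by
    rw [ge_iff_le, ← mul_le_mul_iff_of_pos_right hxpos, hcancel]
    calc 1 / (Real.sqrt 10 * d) * dist P1 A
        ≤ 1 / (Real.sqrt 10 * d) * (Real.sqrt 10 / 2) := by
          apply mul_le_mul_of_nonneg_left h1A (by positivity)
      _ = 1 / (2 * d) := by
          rw [div_mul_div_comm, one_mul]
          rw [div_eq_div_iff (by positivity) (by positivity)]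
          ring
      _ ≤ Real.sin (∠ A P2 P1) * dist P1 P2 := hrhs
  exact ⟨hsinA, le_trans hsinA (Real.sin_le (EuclideanGeometry.angle_nonneg P1 A P2))⟩
end

section
/- For the cubic Bézier curve γ(t) = B t³ + 3P t²(1−t) + 3P t(1−t)² with B = (b1, b2), b1 = 4, s = b2/b1 ∈ [0,1], k ∈ [0,1], P = (1−k)(1,1) + k(1 + s/2, s/2), the squared curvature κ(t)² equals 128(t−1)²t²(k(s²−s+2)+2(s−1))² divided by 9(k²(s²−2s+2)(1−2t)² − 4k(s−1)(2t−1)(2st²−2t+1) + 4(8(s²+1)t⁴ − 8(s+1)t³ + 4(s+2)t² − 4t + 1))³, and this quantity is less than 3 for all s, k ∈ [0,1] and t ∈ (0,1). -/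
lemma abs_rpow_sq (D Q : ℝ) (hQ : 0 < Q) :
    (|D| / Q ^ ((3:ℝ)/2))^2 = D^2 / Q^3 := by
  rw [div_pow, sq_abs]
  congr 1
  rw [← Real.rpow_natCast (Q ^ ((3:ℝ)/2)) 2, ← Real.rpow_mul hQ.le,
    ← Real.rpow_natCast Q 3]
  norm_num

lemma lt3_key (N Qd : ℝ) (hN : N ≤ 32) (hQd : 9/8 ≤ Qd) : N / (9 * Qd^3) < 3 := by
  have h0 : (0:ℝ) < Qd := by linarith
  have h3 : (9/8:ℝ)^3 ≤ Qd^3 := pow_le_pow_left₀ (by norm_num) hQd 3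
  rw [div_lt_iff₀ (by positivity)]
  nlinarith [h3]

lemma div_key (N Qd : ℝ) (h0 : 0 < Qd) :
    81/8 * N / ((9/2) * Qd)^3 = N / (9 * Qd^3) := by
  rw [div_eq_div_iff (by positivity) (by positivity)]
  ring

lemma hA_lem (t : ℝ) (ht0 : 0 < t) (ht1 : t < 1) : (t-1)^2*t^2 ≤ 1/16 := by
  have h1 : 0 < t*(1-t) := mul_pos ht0 (by linarith)
  have h2 : t*(1-t) ≤ 1/4 := by nlinarith [sq_nonneg (2*t-1)]
  nlinarith [mul_le_mul h2 h2 h1.le (by norm_num : (0:ℝ) ≤ 1/4)]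

lemma hM_lem (s k : ℝ) (hs0 : 0 ≤ s) (hs1 : s ≤ 1) (hk0 : 0 ≤ k) (hk1 : k ≤ 1) :
    (k*(s^2 - s + 2) + 2*(s - 1))^2 ≤ 4 := by
  have hs2 : (0:ℝ) ≤ s^2 - s + 2 := by nlinarith [sq_nonneg (2*s-1)]
  have hMub : k*(s^2 - s + 2) + 2*(s - 1) ≤ 2 := by
    nlinarith [mul_nonneg (by linarith : (0:ℝ) ≤ 1 - k) hs2, sq_nonneg (1-s)]
  have hMlb : -2 ≤ k*(s^2 - s + 2) + 2*(s - 1) := by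
    nlinarith [mul_nonneg hk0 hs2]
  nlinarith [hMub, hMlb]

lemma hN_lem (s k t : ℝ) (hs0 : 0 ≤ s) (hs1 : s ≤ 1) (hk0 : 0 ≤ k) (hk1 : k ≤ 1)
    (ht0 : 0 < t) (ht1 : t < 1) :
    128*(t-1)^2*t^2*(k*(s^2 - s + 2) + 2*(s - 1))^2 ≤ 32 := by
  nlinarith [mul_le_mul (hA_lem t ht0 ht1) (hM_lem s k hs0 hs1 hk0 hk1)
    (sq_nonneg (k*(s^2 - s + 2) + 2*(s - 1))) (by norm_num : (0:ℝ) ≤ 1/16)]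

set_option maxHeartbeats 1000000 in
lemma bezier_aux_s19 (s k t : ℝ) (hs0 : 0 ≤ s) (hs1 : s ≤ 1) (hk0 : 0 ≤ k) (hk1 : k ≤ 1)
    (ht0 : 0 < t) (ht1 : t < 1) (XP XPP YP YPP : ℝ)
    (hXP : XP = 12*t^2 + (-(6+3*k*s))*t + (3 + 3*k*s/2))
    (hXPP : XPP = 24*t + (-(6+3*k*s)))
    (hYP : YP = 12*s*t^2 + (-(6-6*k+3*k*s))*t + (3 - 3*k + 3*k*s/2))
    (hYPP : YPP = 24*s*t + (-(6-6*k+3*k*s))) :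
    (|XP * YPP - YP * XPP| / (XP^2 + YP^2) ^ ((3:ℝ)/2))^2 =
        128*(t-1)^2*t^2*(k*(s^2 - s + 2) + 2*(s - 1))^2 /
          (9*(k^2*(s^2 - 2*s + 2)*(1 - 2*t)^2
              - 4*k*(s - 1)*(2*t - 1)*(2*s*t^2 - 2*t + 1)
              + 4*(8*(s^2 + 1)*t^4 - 8*(s + 1)*t^3 + 4*(s + 2)*t^2 - 4*t + 1))^3) ∧
      (|XP * YPP - YP * XPP| / (XP^2 + YP^2) ^ ((3:ℝ)/2))^2 < 3 ∧
      (|XP * YPP - YP * XPP| / (XP^2 + YP^2) ^ ((3:ℝ)/2))^2 ≤ 3 * 4 := by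
  have hxp : 9/4 ≤ XP := by
    rw [hXP]
    nlinarith [sq_nonneg (24*t - 6 - 3*k*s), mul_nonneg hk0 hs0,
      mul_le_one₀ hk1 hs0 hs1]
  have hQpos : (0:ℝ) < XP^2 + YP^2 := by
    nlinarith [sq_nonneg YP, sq_nonneg (XP - 9/4)]
  have hQd : 9/8 ≤ k^2*(s^2 - 2*s + 2)*(1 - 2*t)^2
              - 4*k*(s - 1)*(2*t - 1)*(2*s*t^2 - 2*t + 1)
              + 4*(8*(s^2 + 1)*t^4 - 8*(s + 1)*t^3 + 4*(s + 2)*t^2 - 4*t + 1) := by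
    rw [hXP] at hxp
    nlinarith [sq_nonneg (12*s*t^2 + (-(6-6*k+3*k*s))*t + (3 - 3*k + 3*k*s/2)),
      sq_nonneg ((12*t^2 + (-(6+3*k*s))*t + (3 + 3*k*s/2)) - 9/4), hxp]
  have hQdpos : (0:ℝ) < k^2*(s^2 - 2*s + 2)*(1 - 2*t)^2
              - 4*k*(s - 1)*(2*t - 1)*(2*s*t^2 - 2*t + 1)
              + 4*(8*(s^2 + 1)*t^4 - 8*(s + 1)*t^3 + 4*(s + 2)*t^2 - 4*t + 1) := by
    linarith
  have hD_eq : (XP * YPP - YP * XPP)^2 =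
      81/8 * (128*(t-1)^2*t^2*(k*(s^2 - s + 2) + 2*(s - 1))^2) := by
    rw [hXP, hXPP, hYP, hYPP]; ring
  have hQ_eq : XP^2 + YP^2 = (9/2) * (k^2*(s^2 - 2*s + 2)*(1 - 2*t)^2
              - 4*k*(s - 1)*(2*t - 1)*(2*s*t^2 - 2*t + 1)
              + 4*(8*(s^2 + 1)*t^4 - 8*(s + 1)*t^3 + 4*(s + 2)*t^2 - 4*t + 1)) := by
    rw [hXP, hYP]; ring
  have hval : (|XP * YPP - YP * XPP| / (XP^2 + YP^2) ^ ((3:ℝ)/2))^2 =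
        128*(t-1)^2*t^2*(k*(s^2 - s + 2) + 2*(s - 1))^2 /
          (9*(k^2*(s^2 - 2*s + 2)*(1 - 2*t)^2
              - 4*k*(s - 1)*(2*t - 1)*(2*s*t^2 - 2*t + 1)
              + 4*(8*(s^2 + 1)*t^4 - 8*(s + 1)*t^3 + 4*(s + 2)*t^2 - 4*t + 1))^3) := by
    rw [abs_rpow_sq _ _ hQpos, hD_eq, hQ_eq]
    exact div_key _ _ hQdpos
  have hlt : (|XP * YPP - YP * XPP| / (XP^2 + YP^2) ^ ((3:ℝ)/2))^2 < 3 := by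
    rw [hval]
    exact lt3_key _ _ (hN_lem s k t hs0 hs1 hk0 hk1 ht0 ht1) hQd
  exact ⟨hval, hlt, by linarith [hlt]⟩

lemma deriv_cubic' (a b c : ℝ) :
    deriv (fun t : ℝ => a*t^3 + b*t^2 + c*t) = fun t => 3*a*t^2 + 2*b*t + c := by
  funext t
  have h : HasDerivAt (fun u : ℝ => a*u^3 + b*u^2 + c*u) (3*a*t^2 + 2*b*t + c) t := by
    have := (((hasDerivAt_pow 3 t).const_mul a).add
      (((hasDerivAt_pow 2 t).const_mul b).add ((hasDerivAt_id t).const_mul c)))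
    convert this using 1
    · rfl
    · rfl
    · funext u; simp only [Pi.add_apply, id_eq]; ring
    · push_cast; ring
  exact h.deriv

lemma deriv_quad' (a b c : ℝ) :
    deriv (fun t : ℝ => a*t^2 + b*t + c) = fun t => 2*a*t + b := by
  funext t
  have h : HasDerivAt (fun u : ℝ => a*u^2 + b*u + c) (2*a*t + b) t := by
    have := (((hasDerivAt_pow 2 t).const_mul a).add
      (((hasDerivAt_id t).const_mul b).add (hasDerivAt_const t c)))
    convert this using 1
    · rfl
    · rfl
    · funext u; simp only [Pi.add_apply, id_eq]; ring
    · push_cast; ring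
  exact h.deriv

/-- The `b1 = 4` base case of the curvature bound (Section 4.3.3): the squared curvature
of the Bézier edge curve equals the stated rational expression, which is less than `3`,
hence at most `3·b1`. -/
theorem bezier_edge_curvature_base_case (s k : ℝ)
    (hs : s ∈ Set.Icc (0:ℝ) 1) (hk : k ∈ Set.Icc (0:ℝ) 1) :
    let b1 : ℝ := 4
    let B : ℝ × ℝ := (b1, b1 * s)
    let P : ℝ × ℝ := (1 - k) • ((1:ℝ), (1:ℝ)) + k • ((1 + s/2 : ℝ), (s/2 : ℝ))
    let x : ℝ → ℝ := fun t => t^3 * B.1 + 3*t^2*(1-t) * P.1 + 3*t*(1-t)^2 * P.1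
    let y : ℝ → ℝ := fun t => t^3 * B.2 + 3*t^2*(1-t) * P.2 + 3*t*(1-t)^2 * P.2
    let κ : ℝ → ℝ := fun t =>
      |deriv x t * deriv (deriv y) t - deriv y t * deriv (deriv x) t| /
        ((deriv x t)^2 + (deriv y t)^2) ^ ((3:ℝ)/2)
    ∀ t ∈ Set.Ioo (0:ℝ) 1,
      κ t ^ 2 =
        128*(t-1)^2*t^2*(k*(s^2 - s + 2) + 2*(s - 1))^2 /
          (9*(k^2*(s^2 - 2*s + 2)*(1 - 2*t)^2
              - 4*k*(s - 1)*(2*t - 1)*(2*s*t^2 - 2*t + 1)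
              + 4*(8*(s^2 + 1)*t^4 - 8*(s + 1)*t^3 + 4*(s + 2)*t^2 - 4*t + 1))^3) ∧
      κ t ^ 2 < 3 ∧ κ t ^ 2 ≤ 3 * b1 := by
  intro b1 B P x y κ t ht
  obtain ⟨ht0, ht1⟩ := ht
  obtain ⟨hs0, hs1⟩ := hs
  obtain ⟨hk0, hk1⟩ := hk
  have hx : x = fun u => 4*u^3 + (-(3*(1+k*(s/2))))*u^2 + (3*(1+k*(s/2)))*u := by
    funext u
    unfold x P B b1
    simp only [Prod.smul_mk, smul_eq_mul, Prod.mk_add_mk, mul_one]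
    ring
  have hy : y = fun u => (4*s)*u^3 + (-(3*(1-k+k*(s/2))))*u^2 + (3*(1-k+k*(s/2)))*u := by
    funext u
    unfold y P B b1
    simp only [Prod.smul_mk, smul_eq_mul, Prod.mk_add_mk, mul_one]
    ring
  have hdx : deriv x = fun u => 12*u^2 + (-(6+3*k*s))*u + (3 + 3*k*s/2) := by
    rw [hx, deriv_cubic']; funext u; ring
  have hdy : deriv y = fun u => 12*s*u^2 + (-(6-6*k+3*k*s))*u + (3 - 3*k + 3*k*s/2) := by
    rw [hy, deriv_cubic']; funext u; ring
  have hddx : deriv (deriv x) = fun u => 24*u + (-(6+3*k*s)) := by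
    rw [hdx, deriv_quad']; funext u; ring
  have hddy : deriv (deriv y) = fun u => 24*s*u + (-(6-6*k+3*k*s)) := by
    rw [hdy, deriv_quad']; funext u; ring
  have e1 : deriv x t = 12*t^2 + (-(6+3*k*s))*t + (3 + 3*k*s/2) := by rw [hdx]
  have e2 : deriv (deriv x) t = 24*t + (-(6+3*k*s)) := by rw [hddx]
  have e3 : deriv y t = 12*s*t^2 + (-(6-6*k+3*k*s))*t + (3 - 3*k + 3*k*s/2) := by rw [hdy]
  have e4 : deriv (deriv y) t = 24*s*t + (-(6-6*k+3*k*s)) := by rw [hddy]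
  exact bezier_aux_s19 s k t hs0 hs1 hk0 hk1 ht0 ht1 _ _ _ _ e1 e2 e3 e4
end
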